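/- arXiv:2207.13758 — 3 statements merged into one kernel-verified Lean document; each statement's English description precedes it below -/
import Mathlib

section
/- Let V be a real random variable with all moments finite and ξ another random variable. If E[V^m | ξ] = E[V^m] almost surely for every nonnegative integer m, and V is normally distributed N(0, c²) (so its law is determined by its moments), then E[exp(itV) | ξ] = exp(−t²c²/2) almost surely for every real t. -/
open MeasureTheory ProbabilityTheory Complex

/-! On an event `A ∈ σ(ξ)`, expand `exp (itV)` in its power series and integrate term by term,
the terms being dominated by `(|t| |V|)ⁿ/n!`, whose sum `exp (|t| |V|)` is integrable because `V` is
Gaussian: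
`E[exp (itV); A] = ∑ (it)ⁿ/n! E[Vⁿ; A] = P(A) ∑ (it)ⁿ/n! E[Vⁿ] = P(A) E[exp (itV)]`.
Hence the conditional characteristic function is the constant `E[exp (itV)]`, which is the
Gaussian characteristic function. -/

section

variable {Ω : Type*} {mΩ : MeasurableSpace Ω} {μ : Measure Ω} {X : Ω → ℝ} {t : ℝ}

lemma hasSum_integral_cexp_mul_I (hX : AEMeasurable X μ)
    (hexp : Integrable (fun ω => Real.exp (|t| * |X ω|)) μ) :
    HasSum (fun n : ℕ => (t * I) ^ n / n.factorial * ((∫ ω, X ω ^ n ∂μ : ℝ) : ℂ))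
      (∫ ω, cexp (t * X ω * I) ∂μ) := by
  have hterm (n : ℕ) : ∫ ω, (t * X ω * I) ^ n / n.factorial ∂μ
      = (t * I) ^ n / n.factorial * ((∫ ω, X ω ^ n ∂μ : ℝ) : ℂ) := by
    rw [← integral_complex_ofReal, ← integral_const_mul]
    congr 1 with ω
    push_cast
    ring
  simp_rw [← hterm]
  refine hasSum_integral_of_dominated_convergence (fun n ω => (|t| * |X ω|) ^ n / n.factorial)
    (fun n => by fun_prop) (fun n => ae_of_all _ fun ω => ?_)
    (ae_of_all _ fun ω => Real.summable_pow_div_factorial _) ?_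
    (ae_of_all _ fun ω => ?_)
  · simp
  · simpa only [Real.exp_eq_exp_ℝ, NormedSpace.exp_eq_tsum_div] using hexp
  · simpa only [Complex.exp_eq_exp_ℂ] using NormedSpace.expSeries_div_hasSum_exp (t * X ω * I)

variable {m : MeasurableSpace Ω} {E : Type*} [NormedAddCommGroup E] [NormedSpace ℝ E]
  [CompleteSpace E] {f : Ω → E} {c : E}

lemma setIntegral_eq_of_condExp_ae_eq_const (hm : m ≤ mΩ) [SigmaFinite (μ.trim hm)]
    (hf : Integrable f μ) (hcond : μ[f | m] =ᵐ[μ] fun _ => c) {s : Set Ω}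
    (hs : MeasurableSet[m] s) : ∫ ω in s, f ω ∂μ = μ.real s • c := by
  rw [← setIntegral_condExp hm hf hs, integral_congr_ae (ae_restrict_of_ae hcond),
    setIntegral_const]

lemma condExp_ae_eq_const_of_forall_setIntegral_eq (hm : m ≤ mΩ) [IsFiniteMeasure μ]
    (hf : Integrable f μ) (hset : ∀ s, MeasurableSet[m] s → ∫ ω in s, f ω ∂μ = μ.real s • c) :
    μ[f | m] =ᵐ[μ] fun _ => c :=
  (ae_eq_condExp_of_forall_setIntegral_eq hm hf (fun _ _ hμs => integrableOn_const hμs.ne)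
    (fun s hs _ => by rw [setIntegral_const, hset s hs])
    stronglyMeasurable_const.aestronglyMeasurable).symm

theorem condExp_cexp_mul_I_ae_eq_integral (hm : m ≤ mΩ) [IsFiniteMeasure μ]
    (hX : AEMeasurable X μ) (hexp : Integrable (fun ω => Real.exp (|t| * |X ω|)) μ)
    (hmom : ∀ n : ℕ, Integrable (fun ω => X ω ^ n) μ)
    (hcond : ∀ n : ℕ, μ[fun ω => X ω ^ n | m] =ᵐ[μ] fun _ => ∫ ω, X ω ^ n ∂μ) :
    μ[fun ω => cexp (t * X ω * I) | m] =ᵐ[μ] fun _ => ∫ ω, cexp (t * X ω * I) ∂μ := by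
  have hint : Integrable (fun ω => cexp (t * X ω * I)) μ :=
    Integrable.of_bound (by fun_prop) 1 (ae_of_all _ fun ω => by
      rw [← ofReal_mul, norm_exp_ofReal_mul_I])
  refine condExp_ae_eq_const_of_forall_setIntegral_eq hm hint fun s hs => ?_
  have hsum_s := hasSum_integral_cexp_mul_I hX.restrict (hexp.restrict (s := s))
  have hsum := (hasSum_integral_cexp_mul_I hX hexp).mul_left (μ.real s : ℂ)
  rw [Complex.real_smul]
  refine hsum_s.unique (hsum.congr_fun fun n => ?_)
  rw [setIntegral_eq_of_condExp_ae_eq_const hm (hmom n) (hcond n) hs, smul_eq_mul]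
  push_cast
  ring

end

theorem condexp_charFun_gaussian_of_condexp_moments_general
    {Ω : Type*} [MeasurableSpace Ω] (μ : Measure Ω) [IsProbabilityMeasure μ]
    (c : ℝ)
    (V ξ : Ω → ℝ) (hV : Measurable V) (hξ : Measurable ξ)
    (hmom : ∀ m : ℕ, Integrable (fun ω => V ω ^ m) μ)
    (hVgauss : μ.map V = gaussianReal 0 (Real.toNNReal (c ^ 2)))
    (hcond : ∀ m : ℕ,
      μ[fun ω => V ω ^ m | MeasurableSpace.comap ξ inferInstance] =ᵐ[μ]
        fun _ => ∫ ω, V ω ^ m ∂μ) :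
    ∀ t : ℝ,
      μ[fun ω => Complex.exp (t * V ω * Complex.I) | MeasurableSpace.comap ξ inferInstance]
        =ᵐ[μ] fun _ => (Real.exp (-(t ^ 2 * c ^ 2) / 2) : ℂ) := by
  intro t
  have hexp_mul (a : ℝ) : Integrable (fun ω => Real.exp (a * V ω)) μ := by
    have h := integrable_exp_mul_gaussianReal (μ := 0) (v := Real.toNNReal (c ^ 2)) a
    rw [← hVgauss] at h
    exact h.comp_measurable hV
  have hcharFun : ∫ ω, cexp (t * V ω * I) ∂μ = (Real.exp (-(t ^ 2 * c ^ 2) / 2) : ℂ) := by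
    calc ∫ ω, cexp (t * V ω * I) ∂μ = ∫ x, cexp (t * x * I) ∂(μ.map V) :=
          (integral_map hV.aemeasurable (by fun_prop :
            AEStronglyMeasurable (fun x : ℝ => cexp (t * x * I)) (μ.map V))).symm
      _ = _ := by
          rw [hVgauss, ← charFun_apply_real, charFun_gaussianReal,
            Real.coe_toNNReal _ (sq_nonneg c)]
          push_cast
          ring_nf
  rw [← hcharFun]
  exact condExp_cexp_mul_I_ae_eq_integral hξ.comap_le hV.aemeasurable
    (integrable_exp_abs_mul_abs (hexp_mul t) (hexp_mul (-t))) hmom hcond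

/-- If all conditional moments of a Gaussian `V ~ N(0, c²)` given `ξ` coincide with the
unconditional ones, then the conditional characteristic function of `V` given `ξ` is the
Gaussian characteristic function `exp (−t² c² / 2)`, a.s. -/
theorem condexp_charFun_gaussian_of_condexp_moments
    {Ω : Type*} [MeasurableSpace Ω] (μ : Measure Ω) [IsProbabilityMeasure μ]
    (c : ℝ) (hc : 0 < c)
    (V ξ : Ω → ℝ) (hV : Measurable V) (hξ : Measurable ξ)
    (hmom : ∀ m : ℕ, Integrable (fun ω => V ω ^ m) μ)
    (hVgauss : μ.map V = gaussianReal 0 (Real.toNNReal (c ^ 2)))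
    (hcond : ∀ m : ℕ,
      μ[fun ω => V ω ^ m | MeasurableSpace.comap ξ inferInstance] =ᵐ[μ]
        fun _ => ∫ ω, V ω ^ m ∂μ) :
    ∀ t : ℝ,
      μ[fun ω => Complex.exp (t * V ω * Complex.I) | MeasurableSpace.comap ξ inferInstance]
        =ᵐ[μ] fun _ => (Real.exp (-(t ^ 2 * c ^ 2) / 2) : ℂ) :=
  condexp_charFun_gaussian_of_condexp_moments_general μ c V ξ hV hξ hmom hVgauss hcond
end

section
/- Suppose S_{[ns]}/σ_n ⇒ |c| W(s) as a functional CLT (in particular S_{[ns]}/σ_n converges in distribution to |c|√s · Z for each fixed s > 0, Z standard normal), and also S_n/σ_n ⇒ |c| Z. Then σ_{[ns]}²/σ_n² → s for every s > 0; in particular σ_n² is regularly varying of index 1. -/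
open MeasureTheory ProbabilityTheory Filter

open Real
open scoped NNReal ENNReal


lemma gauss_int {v : ℝ} (hv : 0 < v) {t : ℝ} (ht : 0 ≤ t) :
    ∫ x, Real.exp (-(t * x ^ 2) / 2) ∂(gaussianReal 0 v.toNNReal) =
      (Real.sqrt (1 + t * v))⁻¹ := by
  have hvnn : v.toNNReal ≠ 0 := by simp [Real.toNNReal_eq_zero, hv, not_le]
  rw [gaussianReal_of_var_ne_zero _ hvnn, gaussianPDF_def]
  have : (fun x => ENNReal.ofReal (gaussianPDFReal 0 v.toNNReal x))
      = fun x => ((Real.toNNReal (gaussianPDFReal 0 v.toNNReal x) : ℝ≥0) : ℝ≥0∞) := rfl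
  rw [this, integral_withDensity_eq_integral_smul
    ((measurable_gaussianPDFReal 0 v.toNNReal).real_toNNReal)]
  have hcoe : (v.toNNReal : ℝ) = v := Real.coe_toNNReal _ hv.le
  have hb : 0 < t / 2 + (2 * v)⁻¹ := by positivity
  calc ∫ x, (gaussianPDFReal 0 v.toNNReal x).toNNReal • Real.exp (-(t * x ^ 2) / 2)
      = ∫ x, (Real.sqrt (2 * π * v))⁻¹ * Real.exp (-(t / 2 + (2 * v)⁻¹) * x ^ 2) := by
        congr 1
        ext x
        rw [NNReal.smul_def, smul_eq_mul, Real.coe_toNNReal _ (gaussianPDFReal_nonneg _ _ _),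
          gaussianPDFReal, hcoe]
        rw [mul_assoc, ← Real.exp_add]
        ring_nf
    _ = (Real.sqrt (2 * π * v))⁻¹ * Real.sqrt (π / (t / 2 + (2 * v)⁻¹)) := by
        rw [integral_const_mul, integral_gaussian]
    _ = (Real.sqrt (1 + t * v))⁻¹ := by
        rw [← Real.sqrt_inv, ← Real.sqrt_mul (by positivity), ← Real.sqrt_inv]
        congr 1
        field_simp
        ring

noncomputable def expSqBCF (t : ℝ) (ht : 0 ≤ t) : BoundedContinuousFunction ℝ ℝ :=
  BoundedContinuousFunction.ofNormedAddCommGroup (fun x => Real.exp (-(t * x ^ 2) / 2))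
    (by continuity) 1 (fun x => by
      rw [Real.norm_eq_abs, abs_of_pos (Real.exp_pos _)]
      apply Real.exp_le_one_iff.2
      have : 0 ≤ t * x ^ 2 := by positivity
      linarith)

lemma expSqBCF_apply (t : ℝ) (ht : 0 ≤ t) (x : ℝ) :
    expSqBCF t ht x = Real.exp (-(t * x ^ 2) / 2) := rfl

/-- If `S ⌊ns⌋ / σ n ⇒ |c| √s Z` for each `s > 0` and `S n / σ n ⇒ |c| Z`, then
`σ ⌊ns⌋² / σ n² → s` for every `s > 0`, i.e. `σ_n²` is regularly varying of index 1. -/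
theorem variance_regularly_varying_of_fclt
    {Ω : Type*} [MeasurableSpace Ω] (μ : Measure Ω) [IsProbabilityMeasure μ]
    (S : ℕ → Ω → ℝ) (σ : ℕ → ℝ) (c : ℝ) (hc : c ≠ 0)
    (hSmeas : ∀ n, Measurable (S n))
    (hσ : ∀ n, σ n = Real.sqrt (∫ ω, (S n ω) ^ 2 ∂μ))
    (hσpos : ∀ᶠ n in (atTop : Filter ℕ), 0 < σ n)
    (hfdd : ∀ s : ℝ, 0 < s → ∀ g : BoundedContinuousFunction ℝ ℝ,
      Tendsto (fun n : ℕ => ∫ ω, g (S ⌊(n : ℝ) * s⌋₊ ω / σ n) ∂μ) atTop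
        (nhds (∫ x, g x ∂(gaussianReal 0 (Real.toNNReal (c ^ 2 * s))))))
    (hclt : ∀ g : BoundedContinuousFunction ℝ ℝ,
      Tendsto (fun n : ℕ => ∫ ω, g (S n ω / σ n) ∂μ) atTop
        (nhds (∫ x, g x ∂(gaussianReal 0 (Real.toNNReal (c ^ 2)))))) :
    ∀ s : ℝ, 0 < s →
      Tendsto (fun n : ℕ => σ ⌊(n : ℝ) * s⌋₊ ^ 2 / σ n ^ 2) atTop (nhds s) := by
  intro s hs
  have hc2 : (0:ℝ) < c ^ 2 := by positivity
  have hc2s : (0:ℝ) < c ^ 2 * s := by positivity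
  set m : ℕ → ℕ := fun n => ⌊(n : ℝ) * s⌋₊ with hm
  have hmt : Tendsto m atTop atTop :=
    tendsto_nat_floor_atTop.comp (Tendsto.atTop_mul_const hs tendsto_natCast_atTop_atTop)
  set F : ℕ → ℝ → ℝ := fun k t => ∫ ω, Real.exp (-(t * (S k ω / σ k) ^ 2) / 2) ∂μ with hF
  have hmeas : ∀ k t, Measurable (fun ω => Real.exp (-(t * (S k ω / σ k) ^ 2) / 2)) := by
    intro k t
    exact (((((hSmeas k).div_const _).pow_const 2).const_mul t).neg.div_const 2).exp
  have hInt : ∀ k, ∀ t : ℝ, 0 ≤ t →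
      Integrable (fun ω => Real.exp (-(t * (S k ω / σ k) ^ 2) / 2)) μ := by
    intro k t ht
    refine (integrable_const (1:ℝ)).mono' (hmeas k t).aestronglyMeasurable (ae_of_all _ ?_)
    intro ω
    rw [Real.norm_eq_abs, abs_of_pos (Real.exp_pos _)]
    apply Real.exp_le_one_iff.2
    have : 0 ≤ t * (S k ω / σ k) ^ 2 := by positivity
    linarith
  have hanti : ∀ k, ∀ a b : ℝ, 0 ≤ a → a ≤ b → F k b ≤ F k a := by
    intro k a b ha hab
    refine integral_mono (hInt k b (ha.trans hab)) (hInt k a ha) (fun ω => ?_)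
    apply Real.exp_le_exp.2
    have h2 : 0 ≤ (S k ω / σ k) ^ 2 := sq_nonneg _
    nlinarith
  -- limit of F (m n) t
  have hlim1 : ∀ t : ℝ, ∀ ht : 0 ≤ t,
      Tendsto (fun n => F (m n) t) atTop (nhds ((Real.sqrt (1 + t * c ^ 2))⁻¹)) := by
    intro t ht
    have h := (hclt (expSqBCF t ht)).comp hmt
    simp only [expSqBCF_apply] at h
    rwa [gauss_int hc2 ht] at h
  -- limit of the hfdd sequence
  have hone : (0:ℝ) ≤ 1 := zero_le_one
  have hlim2 : Tendsto (fun n : ℕ => ∫ ω, Real.exp (-(1 * (S (m n) ω / σ n) ^ 2) / 2) ∂μ)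
      atTop (nhds ((Real.sqrt (1 + s * c ^ 2))⁻¹)) := by
    have h := hfdd s hs (expSqBCF 1 hone)
    simp only [expSqBCF_apply] at h
    rw [gauss_int hc2s hone] at h
    convert h using 3
    ring
  set t : ℕ → ℝ := fun n => σ (m n) ^ 2 / σ n ^ 2 with htdef
  have htnn : ∀ n, 0 ≤ t n := fun n => by positivity
  have hid : ∀ᶠ n in atTop,
      ∫ ω, Real.exp (-(1 * (S (m n) ω / σ n) ^ 2) / 2) ∂μ = F (m n) (t n) := by
    filter_upwards [hσpos, hmt.eventually hσpos] with n h1 h2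
    refine integral_congr_ae (ae_of_all _ fun ω => ?_)
    have hσm : σ (m n) ^ 2 ≠ 0 := pow_ne_zero 2 h2.ne'
    have heq : t n * (S (m n) ω / σ (m n)) ^ 2 = 1 * (S (m n) ω / σ n) ^ 2 := by
      rw [htdef, one_mul, div_pow, div_pow, div_mul_div_comm, mul_comm (σ n ^ 2) _,
        mul_div_mul_left _ _ hσm]
    show Real.exp (-(1 * (S (m n) ω / σ n) ^ 2) / 2)
        = Real.exp (-(t n * (S (m n) ω / σ (m n)) ^ 2) / 2)
    rw [heq]
  have key : ∀ ε : ℝ, 0 < ε → ε < s → ∀ᶠ n in atTop, |t n - s| < ε := by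
    intro ε hε hεs
    have hsum : 0 < 1 + s * c ^ 2 := by positivity
    have hlt1 : (Real.sqrt (1 + (s + ε) * c ^ 2))⁻¹ < (Real.sqrt (1 + s * c ^ 2))⁻¹ := by
      apply inv_strictAnti₀ (Real.sqrt_pos.2 hsum)
      apply Real.sqrt_lt_sqrt hsum.le
      nlinarith
    have hlt2 : (Real.sqrt (1 + s * c ^ 2))⁻¹ < (Real.sqrt (1 + (s - ε) * c ^ 2))⁻¹ := by
      have hsum2 : 0 < 1 + (s - ε) * c ^ 2 := by nlinarith
      apply inv_strictAnti₀ (Real.sqrt_pos.2 (by nlinarith))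
      apply Real.sqrt_lt_sqrt hsum2.le
      nlinarith
    have h1 := (hlim1 (s + ε) (by linarith)).eventually_lt hlim2 hlt1
    have h2 := hlim2.eventually_lt (hlim1 (s - ε) (by linarith)) hlt2
    filter_upwards [h1, h2, hid] with n h1 h2 hid
    rw [hid] at h1 h2
    rw [abs_sub_lt_iff]
    constructor
    · by_contra h
      push_neg at h
      exact absurd (hanti (m n) (s + ε) (t n) (by linarith) (by linarith)) (not_le.2 h1)
    · by_contra h
      push_neg at h
      exact absurd (hanti (m n) (t n) (s - ε) (htnn n) (by linarith)) (not_le.2 h2)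
  rw [Metric.tendsto_atTop]
  intro ε hε
  have hε' : 0 < min ε s / 2 := by
    have := lt_min hε hs
    positivity
  have hε'' : min ε s / 2 < s := by
    have : min ε s ≤ s := min_le_right _ _
    linarith
  obtain ⟨N, hN⟩ := eventually_atTop.1 (key _ hε' hε'')
  exact ⟨N, fun n hn => by
    rw [Real.dist_eq]
    calc |σ (m n) ^ 2 / σ n ^ 2 - s| < min ε s / 2 := hN n hn
      _ < ε := by have : min ε s ≤ ε := min_le_left _ _; linarith⟩
end

section
/- (Convergence of types) Let X_n ⇒ X with X nondegenerate, and suppose a_n > 0, b_n ∈ ℝ are such that a_n X_n + b_n ⇒ Y with Y nondegenerate. Then a_n converges to some a > 0 and b_n converges to some b, and Y has the same distribution as aX + b. -/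
/-!
Work with quantile functions `Q p = inf {x | p ≤ F x}`. Weak convergence gives convergence of
the quantiles at every continuity point `p ∈ (0, 1)` of the limit quantile function, and the
quantile function of `a X + b` with `a > 0` is `a Q_X + b`. Since `X` is nondegenerate, `Q_X`
takes different values at two such points `p < p'`; the limits of `a n * Q_{X n} q + b n` at
`q = p, p'` then determine `lim a n` and `lim b n`. Once `a n → α` and `b n → β`, Slutsky's
theorem gives `a n * X n + b n ⇒ α X + β`, so `Y` has the law of `α X + β`, and `α ≠ 0` because
`Y` is nondegenerate.
-/

open MeasureTheory ProbabilityTheory Filter Set Topology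

section Cdf

variable {ν : Measure ℝ}

theorem cdf_map_mul_add [IsProbabilityMeasure ν] {a b : ℝ} (ha : 0 < a) (y : ℝ) :
    cdf (ν.map fun x => a * x + b) y = cdf ν ((y - b) / a) := by
  have hm : Measurable fun x : ℝ => a * x + b := by fun_prop
  have : IsProbabilityMeasure (ν.map fun x => a * x + b) :=
    Measure.isProbabilityMeasure_map hm.aemeasurable
  have hpre : (fun x => a * x + b) ⁻¹' Iic y = Iic ((y - b) / a) := by
    ext x
    simp only [mem_preimage, mem_Iic, le_div_iff₀ ha]
    constructor <;> intro h <;> linarith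
  rw [cdf_eq_real, cdf_eq_real, measureReal_def, measureReal_def,
    Measure.map_apply hm measurableSet_Iic, hpre]

theorem measure_singleton_eq_zero_of_continuousAt_cdf [IsProbabilityMeasure ν] {x : ℝ}
    (hx : ContinuousAt (cdf ν) x) : ν {x} = 0 := by
  rw [← measure_cdf ν, StieltjesFunction.measure_singleton,
    ((monotone_cdf ν).continuousWithinAt_Iio_iff_leftLim_eq).1 hx.continuousWithinAt,
    sub_self, ENNReal.ofReal_zero]

theorem dense_continuousAt_cdf : Dense {x | ContinuousAt (cdf ν) x} := by
  simpa only [compl_ofPred, not_not] using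
    (monotone_cdf ν).countable_not_continuousAt.dense_compl ℝ

end Cdf

/-- Junk value `0` outside `(0, 1)`, where the set is empty or unbounded below. -/
noncomputable def quantile (ν : Measure ℝ) (p : ℝ) : ℝ := sInf {x | p ≤ cdf ν x}

section Quantile

variable {ν : Measure ℝ} {p x : ℝ}

theorem quantile_le_iff (hp : p ∈ Ioo 0 1) : quantile ν p ≤ x ↔ p ≤ cdf ν x := by
  have hne : {x | p ≤ cdf ν x}.Nonempty :=
    ((tendsto_cdf_atTop ν).eventually_const_le hp.2).exists
  obtain ⟨x₀, hx₀⟩ := ((tendsto_cdf_atBot ν).eventually_lt_const hp.1).exists_forall_of_atBot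
  have hbdd : BddBelow {x | p ≤ cdf ν x} :=
    ⟨x₀, fun y hy => le_of_not_gt fun hyx => (hx₀ y hyx.le).not_ge hy⟩
  refine ⟨fun h => le_trans ?_ ((cdf ν).mono h), fun h => csInf_le hbdd h⟩
  -- `cdf ν` is right-continuous, so the infimum is attained.
  refine ge_of_tendsto (((cdf ν).right_continuous _).mono Ioi_subset_Ici_self).tendsto
    (eventually_nhdsWithin_of_forall fun y hy => ?_)
  obtain ⟨z, hz, hzy⟩ := exists_lt_of_csInf_lt hne hy
  exact hz.trans ((cdf ν).mono hzy.le)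

theorem lt_quantile_iff (hp : p ∈ Ioo 0 1) : x < quantile ν p ↔ cdf ν x < p := by
  rw [← not_le, quantile_le_iff hp, not_le]

theorem monotoneOn_quantile : MonotoneOn (quantile ν) (Ioo 0 1) :=
  fun _ hp _ hq hpq => (quantile_le_iff hp).2 (hpq.trans ((quantile_le_iff hq).1 le_rfl))

theorem countable_not_continuousAt_quantile :
    {p ∈ Ioo 0 1 | ¬ContinuousAt (quantile ν) p}.Countable :=
  (monotoneOn_quantile (ν := ν)).countable_not_continuousWithinAt.mono fun _ hp =>
    show _ ∧ _ from ⟨hp.1, fun h => hp.2 (h.continuousAt (Ioo_mem_nhds hp.1.1 hp.1.2))⟩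

theorem quantile_map_mul_add [IsProbabilityMeasure ν] {a b : ℝ} (ha : 0 < a)
    (hp : p ∈ Ioo 0 1) :
    quantile (ν.map fun x => a * x + b) p = a * quantile ν p + b := by
  have : IsProbabilityMeasure (ν.map fun x => a * x + b) :=
    Measure.isProbabilityMeasure_map (by fun_prop)
  refine eq_of_forall_ge_iff fun y => ?_
  rw [quantile_le_iff hp, cdf_map_mul_add ha, ← quantile_le_iff hp, le_div_iff₀ ha]
  constructor <;> intro h <;> linarith

theorem eq_dirac_of_quantile_eq [IsProbabilityMeasure ν] {c : ℝ}
    (h : ∀ p ∈ Ioo 0 1, quantile ν p = c) :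
    ν = Measure.dirac c := by
  refine Measure.eq_of_cdf _ _ (StieltjesFunction.ext fun x => ?_)
  rw [cdf_eq_real (Measure.dirac c), measureReal_def, Measure.dirac_apply' _ measurableSet_Iic]
  by_cases hx : c ≤ x
  · simp only [indicator_of_mem (mem_Iic.2 hx), Pi.one_apply, ENNReal.toReal_one]
    refine le_antisymm (cdf_le_one ν x) (le_of_forall_lt_imp_le_of_dense fun p hp1 => ?_)
    rcases le_or_gt p 0 with hp0 | hp0
    · exact hp0.trans (cdf_nonneg ν x)
    · exact (quantile_le_iff ⟨hp0, hp1⟩).1 (h p ⟨hp0, hp1⟩ ▸ hx)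
  · simp only [indicator_of_notMem (mt mem_Iic.1 hx), ENNReal.toReal_zero]
    refine le_antisymm (le_of_forall_gt_imp_ge_of_dense fun p hp0 => ?_) (cdf_nonneg ν x)
    rcases lt_or_ge p 1 with hp1 | hp1
    · exact ((lt_quantile_iff ⟨hp0, hp1⟩).1 (h p ⟨hp0, hp1⟩ ▸ not_le.1 hx)).le
    · exact (cdf_le_one ν x).trans hp1

theorem exists_quantile_lt_quantile [IsProbabilityMeasure ν]
    (hν : ∀ c, ν ≠ Measure.dirac c) :
    ∃ u v, 0 < u ∧ u < v ∧ v < 1 ∧ quantile ν u < quantile ν v := by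
  by_contra! H
  have hhalf : (1 / 2 : ℝ) ∈ Ioo 0 1 := by norm_num
  refine hν (quantile ν (1 / 2)) (eq_dirac_of_quantile_eq fun p hp => ?_)
  rcases lt_trichotomy p (1 / 2) with hlt | rfl | hgt
  · exact le_antisymm (monotoneOn_quantile hp hhalf hlt.le) (H p _ hp.1 hlt hhalf.2)
  · rfl
  · exact le_antisymm (H _ p hhalf.1 hgt hp.2) (monotoneOn_quantile hhalf hp hgt.le)

end Quantile

theorem Set.Countable.exists_mem_Ioo_notMem {s : Set ℝ} (hs : s.Countable) {a b : ℝ}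
    (hab : a < b) : ∃ x ∈ Ioo a b, x ∉ s :=
  ((hs.dense_compl ℝ).exists_between hab).imp fun _ h => ⟨h.2, h.1⟩

theorem exists_continuousAt_quantile_lt_quantile {ν ν' : Measure ℝ} [IsProbabilityMeasure ν]
    (hν : ∀ c, ν ≠ Measure.dirac c) :
    ∃ p p', p ∈ Ioo 0 1 ∧ p' ∈ Ioo 0 1 ∧ quantile ν p < quantile ν p' ∧
      ∀ q ∈ ({p, p'} : Set ℝ), ContinuousAt (quantile ν) q ∧ ContinuousAt (quantile ν') q := by
  obtain ⟨u, v, hu, huv, hv, hquv⟩ := exists_quantile_lt_quantile hν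
  set bad := {p ∈ Ioo 0 1 | ¬ContinuousAt (quantile ν) p} ∪
    {p ∈ Ioo 0 1 | ¬ContinuousAt (quantile ν') p}
  have hbad : bad.Countable :=
    countable_not_continuousAt_quantile.union countable_not_continuousAt_quantile
  have hgood : ∀ q ∈ Ioo 0 1, q ∉ bad →
      ContinuousAt (quantile ν) q ∧ ContinuousAt (quantile ν') q := fun q hq hqbad => by
    simpa [bad, hq.1, hq.2] using hqbad
  obtain ⟨p, ⟨hp0, hpu⟩, hpbad⟩ := hbad.exists_mem_Ioo_notMem hu
  obtain ⟨p', ⟨hvp', hp'1⟩, hp'bad⟩ := hbad.exists_mem_Ioo_notMem hv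
  have hp : p ∈ Ioo 0 1 := ⟨hp0, hpu.trans (huv.trans hv)⟩
  have hp' : p' ∈ Ioo 0 1 := ⟨hu.trans (huv.trans hvp'), hp'1⟩
  refine ⟨p, p', hp, hp', ?_, ?_⟩
  · calc quantile ν p ≤ quantile ν u := monotoneOn_quantile hp ⟨hu, huv.trans hv⟩ hpu.le
      _ < quantile ν v := hquv
      _ ≤ quantile ν p' := monotoneOn_quantile ⟨hu.trans huv, hv⟩ hp' hvp'.le
  · rintro q (rfl | rfl)
    exacts [hgood _ hp hpbad, hgood _ hp' hp'bad]

section WeakConvergence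

variable {ι : Type*} {l : Filter ι} {ν : ι → ProbabilityMeasure ℝ} {ν₀ : ProbabilityMeasure ℝ}

theorem tendsto_cdf_of_tendsto (h : Tendsto ν l (𝓝 ν₀)) {x : ℝ}
    (hx : ContinuousAt (cdf ν₀) x) : Tendsto (fun i => cdf (ν i) x) l (𝓝 (cdf ν₀ x)) := by
  have hfrontier : (ν₀ : Measure ℝ) (frontier (Iic x)) = 0 := by
    rw [frontier_Iic]
    exact measure_singleton_eq_zero_of_continuousAt_cdf hx
  simp only [cdf_eq_real, measureReal_def]
  exact (ENNReal.tendsto_toReal (measure_ne_top _ _)).comp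
    (ProbabilityMeasure.tendsto_measure_of_null_frontier_of_tendsto' h hfrontier)

theorem tendsto_quantile_of_tendsto (h : Tendsto ν l (𝓝 ν₀)) {p : ℝ} (hp : p ∈ Ioo 0 1)
    (hc : ContinuousAt (quantile ν₀) p) :
    Tendsto (fun i => quantile (ν i) p) l (𝓝 (quantile ν₀ p)) := by
  refine tendsto_order.2 ⟨fun m hm => ?_, fun m hm => ?_⟩
  · obtain ⟨x, hxc, hmx, hxq⟩ := dense_continuousAt_cdf.exists_between hm
    filter_upwards [(tendsto_cdf_of_tendsto h hxc).eventually_lt_const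
      ((lt_quantile_iff hp).1 hxq)] with i hi
    exact hmx.trans ((lt_quantile_iff hp).2 hi)
  · obtain ⟨p', ⟨hpp', hp'1⟩, hp'm⟩ : ∃ p' ∈ Ioo p 1, quantile ν₀ p' < m :=
      (((hc.eventually (eventually_lt_nhds hm)).filter_mono nhdsWithin_le_nhds).and
        (Ioo_mem_nhdsGT hp.2)).exists.imp fun _ h => ⟨h.2, h.1⟩
    obtain ⟨y, hyc, hqy, hym⟩ := dense_continuousAt_cdf.exists_between hp'm
    have hpy : p < cdf ν₀ y :=
      hpp'.trans_le ((quantile_le_iff ⟨hp.1.trans hpp', hp'1⟩).1 hqy.le)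
    filter_upwards [(tendsto_cdf_of_tendsto h hyc).eventually_const_lt hpy] with i hi
    exact ((quantile_le_iff hp).2 hi.le).trans_lt hym

end WeakConvergence

theorem tendsto_affine_coeffs_of_tendsto_two_points {ι : Type*} {l : Filter ι}
    {a b x x' : ι → ℝ} {x₀ x₀' y₀ y₀' : ℝ} (hx : Tendsto x l (𝓝 x₀))
    (hx' : Tendsto x' l (𝓝 x₀')) (hne : x₀ ≠ x₀')
    (hy : Tendsto (fun i => a i * x i + b i) l (𝓝 y₀))
    (hy' : Tendsto (fun i => a i * x' i + b i) l (𝓝 y₀')) :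
    Tendsto a l (𝓝 ((y₀' - y₀) / (x₀' - x₀))) ∧
      Tendsto b l (𝓝 (y₀ - (y₀' - y₀) / (x₀' - x₀) * x₀)) := by
  have hne' : x₀' - x₀ ≠ 0 := sub_ne_zero.2 hne.symm
  have hdx : Tendsto (fun i => x' i - x i) l (𝓝 (x₀' - x₀)) := hx'.sub hx
  have ha : Tendsto a l (𝓝 ((y₀' - y₀) / (x₀' - x₀))) := by
    refine ((hy'.sub hy).div hdx hne').congr' ?_
    filter_upwards [hdx.eventually_ne hne'] with i hi
    rw [Pi.div_apply, div_eq_iff hi]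
    ring
  exact ⟨ha, (hy.sub (ha.mul hx)).congr fun i => by ring⟩

theorem exists_tendsto_of_tendsto_map_mul_add {ι : Type*} {l : Filter ι}
    {ν ν' : ι → ProbabilityMeasure ℝ} {ν₀ ν₀' : ProbabilityMeasure ℝ}
    (h : Tendsto ν l (𝓝 ν₀)) (h' : Tendsto ν' l (𝓝 ν₀'))
    (hν₀ : ∀ c, (ν₀ : Measure ℝ) ≠ Measure.dirac c) {a b : ι → ℝ} (ha : ∀ i, 0 < a i)
    (hν' : ∀ i, (ν' i : Measure ℝ) = (ν i : Measure ℝ).map fun x => a i * x + b i) :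
    ∃ α β, Tendsto a l (𝓝 α) ∧ Tendsto b l (𝓝 β) := by
  obtain ⟨p, p', hp, hp', hlt, hcont⟩ :=
    exists_continuousAt_quantile_lt_quantile (ν' := ν₀') hν₀
  have hconv : ∀ q ∈ ({p, p'} : Set ℝ), q ∈ Ioo 0 1 →
      Tendsto (fun i => quantile (ν i) q) l (𝓝 (quantile ν₀ q)) ∧
        Tendsto (fun i => a i * quantile (ν i) q + b i) l (𝓝 (quantile ν₀' q)) :=
    fun q hq hq01 => ⟨tendsto_quantile_of_tendsto h hq01 (hcont q hq).1,
      (tendsto_quantile_of_tendsto h' hq01 (hcont q hq).2).congr fun i => by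
        rw [hν', quantile_map_mul_add (ha i) hq01]⟩
  obtain ⟨hx, hy⟩ := hconv p (by simp) hp
  obtain ⟨hx', hy'⟩ := hconv p' (by simp) hp'
  exact ⟨_, _, tendsto_affine_coeffs_of_tendsto_two_points hx hx' hlt.ne hy hy'⟩

section RandomVariables

variable {Ω : Type*} [MeasurableSpace Ω] {μ : Measure Ω}

theorem ae_eq_const_of_map_eq_dirac {Z : Ω → ℝ} (hZ : AEMeasurable Z μ) {c : ℝ}
    (h : μ.map Z = Measure.dirac c) : Z =ᵐ[μ] fun _ => c :=
  ae_of_ae_map hZ (p := fun x => x = c) (by rw [h, ae_dirac_eq]; exact rfl)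

theorem tendstoInDistribution_of_forall_integral_tendsto [IsProbabilityMeasure μ] {ι E : Type*}
    [TopologicalSpace E] [MeasurableSpace E] [OpensMeasurableSpace E] {l : Filter ι}
    {X : ι → Ω → E} {Z : Ω → E}
    (hX : ∀ i, AEMeasurable (X i) μ) (hZ : AEMeasurable Z μ)
    (h : ∀ g : BoundedContinuousFunction E ℝ,
      Tendsto (fun i => ∫ ω, g (X i ω) ∂μ) l (𝓝 (∫ ω, g (Z ω) ∂μ))) :
    TendstoInDistribution X l Z (fun _ => μ) μ where
  forall_aemeasurable := hX
  aemeasurable_limit := hZ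
  tendsto := by
    refine ProbabilityMeasure.tendsto_iff_forall_integral_tendsto.2 fun g => ?_
    simp only [ProbabilityMeasure.coe_mk]
    rw [integral_map hZ g.continuous.aestronglyMeasurable]
    simpa only [integral_map (hX _) g.continuous.aestronglyMeasurable] using h g

theorem MeasureTheory.TendstoInDistribution.mul_add [IsProbabilityMeasure μ]
    {X : ℕ → Ω → ℝ} {Z : Ω → ℝ} (h : TendstoInDistribution X atTop Z (fun _ => μ) μ)
    {a b : ℕ → ℝ} {α β : ℝ}
    (ha : Tendsto a atTop (𝓝 α)) (hb : Tendsto b atTop (𝓝 β)) :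
    TendstoInDistribution (fun n ω => a n * X n ω + b n) atTop (fun ω => α * Z ω + β)
      (fun _ => μ) μ :=
  h.continuous_comp_prodMk_of_tendstoInMeasure_const
    (g := fun z : ℝ × ℝ × ℝ => z.2.1 * z.1 + z.2.2) (by fun_prop)
    (tendstoInMeasure_of_tendsto_ae (fun _ => aestronglyMeasurable_const)
      (ae_of_all _ fun _ => ha.prodMk_nhds hb))
    (fun _ => aemeasurable_const)

end RandomVariables

/-- Convergence of types: if `X n ⇒ X` with `X` nondegenerate, `a n > 0`, and
`a n • X n + b n ⇒ Y` with `Y` nondegenerate, then `a n → a > 0`, `b n → b`, and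
`Y =d a X + b`. -/
theorem convergence_of_types
    {Ω : Type*} [MeasurableSpace Ω] (μ : Measure Ω) [IsProbabilityMeasure μ]
    (X : ℕ → Ω → ℝ) (Xl Y : Ω → ℝ) (a : ℕ → ℝ) (b : ℕ → ℝ)
    (hXmeas : ∀ n, Measurable (X n)) (hXlmeas : Measurable Xl) (hYmeas : Measurable Y)
    (hapos : ∀ n, 0 < a n)
    (hXconv : ∀ g : BoundedContinuousFunction ℝ ℝ,
      Tendsto (fun n => ∫ ω, g (X n ω) ∂μ) atTop (nhds (∫ ω, g (Xl ω) ∂μ)))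
    (hYconv : ∀ g : BoundedContinuousFunction ℝ ℝ,
      Tendsto (fun n => ∫ ω, g (a n * X n ω + b n) ∂μ) atTop (nhds (∫ ω, g (Y ω) ∂μ)))
    (hXnondeg : ¬ ∃ r : ℝ, Xl =ᵐ[μ] fun _ => r)
    (hYnondeg : ¬ ∃ r : ℝ, Y =ᵐ[μ] fun _ => r) :
    ∃ (a₀ b₀ : ℝ), 0 < a₀ ∧
      Tendsto a atTop (nhds a₀) ∧ Tendsto b atTop (nhds b₀) ∧
      IdentDistrib Y (fun ω => a₀ * Xl ω + b₀) μ μ := by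
  have hX := tendstoInDistribution_of_forall_integral_tendsto
    (fun n => (hXmeas n).aemeasurable) hXlmeas.aemeasurable hXconv
  have hY := tendstoInDistribution_of_forall_integral_tendsto
    (fun n => ((hXmeas n).const_mul (a n)).add_const (b n) |>.aemeasurable)
    hYmeas.aemeasurable hYconv
  obtain ⟨α, β, ha, hb⟩ := exists_tendsto_of_tendsto_map_mul_add (b := b) hX.tendsto hY.tendsto
    (fun c hc => hXnondeg ⟨c, ae_eq_const_of_map_eq_dirac hXlmeas.aemeasurable hc⟩)
    hapos fun n => (Measure.map_map (g := (a n * · + b n)) (by fun_prop) (hXmeas n)).symm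
  have hmap : μ.map Y = μ.map (fun ω => α * Xl ω + β) :=
    tendstoInDistribution_unique _ hY (hX.mul_add ha hb)
  have hα : α ≠ 0 := by
    rintro rfl
    refine hYnondeg ⟨β, ae_eq_const_of_map_eq_dirac hYmeas.aemeasurable ?_⟩
    simp [hmap, Measure.map_const]
  refine ⟨α, β, (ge_of_tendsto' ha fun n => (hapos n).le).lt_of_ne' hα, ha, hb,
    hYmeas.aemeasurable, by fun_prop, hmap⟩
end
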